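/- arXiv:0807.0817 — 2 statements merged into one kernel-verified Lean document; each statement's English description precedes it below -/
import Mathlib

section
/- Let V be a finite-dimensional vector space over ℚ equipped with a nondegenerate symmetric bilinear form ⟨·,·⟩. If α ∈ V is nonzero and ⟨α,α⟩ = 0, then there exist γ, λ ∈ V such that α = γ + λ, ⟨γ,λ⟩ = 0, ⟨γ,γ⟩ > 0 and ⟨λ,λ⟩ < 0. -/
/-! A nondegenerate form pairs the isotropic vector `α` nontrivially with some `w`; correcting `w`
by a multiple of `α` gives an isotropic `f` with `⟨α, f⟩ = 1`. On the hyperbolic plane spanned by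
`α` and `f`, the vectors `α / 2 + f` and `α / 2 - f` are orthogonal of norms `1` and `-1`. -/

section HyperbolicPair

variable {K V : Type*} [Field K] [NeZero (2 : K)] [AddCommGroup V] [Module K V]
  {B : V →ₗ[K] V →ₗ[K] K}

theorem exists_isotropic_of_apply_ne_zero (hsymm : ∀ x y : V, B x y = B y x) {α w : V}
    (hiso : B α α = 0) (hw : B α w ≠ 0) : ∃ f : V, B α f = 1 ∧ B f f = 0 := by
  refine ⟨(B α w)⁻¹ • w - (B w w / (2 * B α w ^ 2)) • α, ?_, ?_⟩ <;>
  · simp only [map_sub, map_smul, LinearMap.sub_apply, LinearMap.smul_apply, smul_eq_mul, hiso,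
      hsymm w α]
    field_simp
    ring

theorem hyperbolicPair_orthogonal_decomposition (hsymm : ∀ x y : V, B x y = B y x) {α f : V}
    (hα : B α α = 0) (hf : B f f = 0) (hαf : B α f = 1) :
    B ((2⁻¹ : K) • α + f) ((2⁻¹ : K) • α - f) = 0 ∧
      B ((2⁻¹ : K) • α + f) ((2⁻¹ : K) • α + f) = 1 ∧
      B ((2⁻¹ : K) • α - f) ((2⁻¹ : K) • α - f) = -1 := by
  refine ⟨?_, ?_, ?_⟩ <;>
  · simp only [map_add, map_sub, map_smul, LinearMap.add_apply, LinearMap.sub_apply,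
      LinearMap.smul_apply, smul_eq_mul, hα, hf, hαf, hsymm f α]
    field_simp
    ring

end HyperbolicPair

theorem stmt1_general (V : Type*) [AddCommGroup V] [Module ℚ V]
    (B : V →ₗ[ℚ] V →ₗ[ℚ] ℚ)
    (hsymm : ∀ x y : V, B x y = B y x)
    (hnondeg : ∀ v : V, (∀ w : V, B v w = 0) → v = 0)
    (α : V) (hα : α ≠ 0) (hiso : B α α = 0) :
    ∃ γ lam : V, α = γ + lam ∧ B γ lam = 0 ∧ 0 < B γ γ ∧ B lam lam < 0 := by
  obtain ⟨w, hw⟩ : ∃ w, B α w ≠ 0 := by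
    by_contra! h
    exact hα (hnondeg α h)
  obtain ⟨f, hαf, hf⟩ := exists_isotropic_of_apply_ne_zero hsymm hiso hw
  obtain ⟨horth, hpos, hneg⟩ := hyperbolicPair_orthogonal_decomposition hsymm hiso hf hαf
  exact ⟨(2⁻¹ : ℚ) • α + f, (2⁻¹ : ℚ) • α - f, by module, horth, hpos ▸ one_pos,
    hneg ▸ neg_one_lt_zero⟩

/-- Let `V` be a finite-dimensional vector space over ℚ with a nondegenerate
symmetric bilinear form. If `α ≠ 0` is isotropic, then `α = γ + lam` with `⟨γ,lam⟩ = 0`,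
`⟨γ,γ⟩ > 0` and `⟨lam,lam⟩ < 0`. -/
theorem stmt1 (V : Type*) [AddCommGroup V] [Module ℚ V] [FiniteDimensional ℚ V]
    (B : V →ₗ[ℚ] V →ₗ[ℚ] ℚ)
    (hsymm : ∀ x y : V, B x y = B y x)
    (hnondeg : ∀ v : V, (∀ w : V, B v w = 0) → v = 0)
    (α : V) (hα : α ≠ 0) (hiso : B α α = 0) :
    ∃ γ lam : V, α = γ + lam ∧ B γ lam = 0 ∧ 0 < B γ γ ∧ B lam lam < 0 :=
  stmt1_general V B hsymm hnondeg α hα hiso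
end

section
/- Let L be a free ℤ-module of finite rank equipped with a symmetric ℤ-bilinear form B that is nondegenerate and not positive definite. Then for every nonzero v ∈ L there exists γ ∈ L such that B(γ,γ) < 0 and B(v,γ) < 0. -/
/-! Pick `u` with `B u u < 0`: either some nonzero `w` already has `B w w < 0`, or `B w w = 0`
and, choosing `y` with `B w y < 0` by nondegeneracy, `B (m w + y) (m w + y) = 2 m B w y + B y y`
is negative for large `m`. Given `v ≠ 0`, replace `u` by `-u` if needed so that `B v u ≤ 0`, pick
`y` with `B v y < 0`, and take `γ = m u + y` for large `m ≥ 0`. -/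

theorem Int.exists_nonneg_quadratic_neg {a b : ℤ} (c : ℤ) (ha : a ≤ 0) (hab : a < 0 ∨ b < 0) :
    ∃ m : ℤ, 0 ≤ m ∧ m * m * a + 2 * m * b + c < 0 := by
  set m := 2 * |b| + |c| + 1 with hm
  refine ⟨m, by positivity, ?_⟩
  have hm1 : 1 ≤ m := by have := abs_nonneg b; have := abs_nonneg c; omega
  have hc : c ≤ |c| := le_abs_self c
  rcases hab with ha' | hb'
  · have hquad : m * m * a ≤ -(m * m) := by nlinarith
    have hlin : m * b ≤ m * |b| := mul_le_mul_of_nonneg_left (le_abs_self b) (by omega)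
    calc m * m * a + 2 * m * b + c ≤ -(m * m) + 2 * (m * |b|) + |c| := by linarith
      _ = -(m * (|c| + 1)) + |c| := by rw [hm]; ring
      _ < 0 := by nlinarith [abs_nonneg c]
  · have hquad : m * m * a ≤ 0 := mul_nonpos_of_nonneg_of_nonpos (by positivity) ha
    have hlin : m * b ≤ -m := by nlinarith
    linarith [abs_nonneg b, abs_nonneg c]

section BilinearForm

variable {M : Type*} [AddCommGroup M] [Module ℤ M] {B : M →ₗ[ℤ] M →ₗ[ℤ] ℤ}

theorem apply_smul_add_self (hsymm : ∀ x y : M, B x y = B y x) (m : ℤ) (u y : M) :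
    B (m • u + y) (m • u + y) = m * m * B u u + 2 * m * B u y + B y y := by
  simp only [map_add, map_zsmul, LinearMap.add_apply, LinearMap.smul_apply, smul_eq_mul, hsymm y u]
  ring

theorem exists_apply_neg (hnondeg : ∀ x : M, (∀ y : M, B x y = 0) → x = 0) {v : M}
    (hv : v ≠ 0) : ∃ y : M, B v y < 0 := by
  obtain ⟨y, hy⟩ : ∃ y, B v y ≠ 0 := by
    by_contra! h
    exact hv (hnondeg v h)
  rcases hy.lt_or_gt with hneg | hpos
  · exact ⟨y, hneg⟩
  · exact ⟨-y, by simpa using hpos⟩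

theorem exists_neg_smul_add (hsymm : ∀ x y : M, B x y = B y x) {u v y : M}
    (huu : B u u ≤ 0) (hu : B u u < 0 ∨ B u y < 0) (hvu : B v u ≤ 0) (hvy : B v y < 0) :
    ∃ γ : M, B γ γ < 0 ∧ B v γ < 0 := by
  obtain ⟨m, hm, hquad⟩ := Int.exists_nonneg_quadratic_neg (B y y) huu hu
  refine ⟨m • u + y, by rwa [apply_smul_add_self hsymm], ?_⟩
  have : m * B v u ≤ 0 := mul_nonpos_of_nonneg_of_nonpos hm hvu
  rw [map_add, map_zsmul, smul_eq_mul]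
  omega

theorem exists_apply_self_neg (hsymm : ∀ x y : M, B x y = B y x)
    (hnondeg : ∀ x : M, (∀ y : M, B x y = 0) → x = 0)
    (hnotpos : ¬ (∀ x : M, x ≠ 0 → 0 < B x x)) : ∃ u : M, B u u < 0 := by
  push Not at hnotpos
  obtain ⟨w, hw, hww⟩ := hnotpos
  rcases hww.lt_or_eq with hneg | -
  · exact ⟨w, hneg⟩
  obtain ⟨y, hwy⟩ := exists_apply_neg hnondeg hw
  obtain ⟨γ, hγ, -⟩ := exists_neg_smul_add hsymm hww (.inr hwy) hww hwy
  exact ⟨γ, hγ⟩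

end BilinearForm

theorem stmt3_general (L : Type*) [AddCommGroup L] [Module ℤ L]
    (B : L →ₗ[ℤ] L →ₗ[ℤ] ℤ)
    (hsymm : ∀ x y : L, B x y = B y x)
    (hnondeg : ∀ x : L, (∀ y : L, B x y = 0) → x = 0)
    (hnotpos : ¬ (∀ x : L, x ≠ 0 → 0 < B x x)) :
    ∀ v : L, v ≠ 0 → ∃ γ : L, B γ γ < 0 ∧ B v γ < 0 := by
  intro v hv
  obtain ⟨u, huu⟩ := exists_apply_self_neg hsymm hnondeg hnotpos
  obtain ⟨u', hu'u', hvu'⟩ : ∃ u' : L, B u' u' < 0 ∧ B v u' ≤ 0 := by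
    rcases le_total (B v u) 0 with hle | hge
    · exact ⟨u, huu, hle⟩
    · exact ⟨-u, by simpa using huu, by simpa using hge⟩
  obtain ⟨y, hvy⟩ := exists_apply_neg hnondeg hv
  exact exists_neg_smul_add hsymm hu'u'.le (.inl hu'u') hvu' hvy

/-- Let `L` be a free ℤ-module of finite rank with a symmetric ℤ-bilinear form
`B` that is nondegenerate and not positive definite. Then for every nonzero `v ∈ L` there
exists `γ ∈ L` with `B γ γ < 0` and `B v γ < 0`. -/
theorem stmt3 (L : Type*) [AddCommGroup L] [Module ℤ L]
    [Module.Free ℤ L] [Module.Finite ℤ L]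
    (B : L →ₗ[ℤ] L →ₗ[ℤ] ℤ)
    (hsymm : ∀ x y : L, B x y = B y x)
    (hnondeg : ∀ x : L, (∀ y : L, B x y = 0) → x = 0)
    (hnotpos : ¬ (∀ x : L, x ≠ 0 → 0 < B x x)) :
    ∀ v : L, v ≠ 0 → ∃ γ : L, B γ γ < 0 ∧ B v γ < 0 :=
  stmt3_general L B hsymm hnondeg hnotpos
end
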